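/- Let s₁ := (2 3 ⋯ n) and let s₂ ∈ F_n. Define φ(s₂) : {1,…,n} → S_n by φ(s₂)_1 = s₁, φ(s₂)_2 = s₂, and φ(s₂)_i = s₁^{i−2} s₂ s₁^{−(i−2)} for 3 ≤ i ≤ n. Then φ(s₂) is a quandle structure of cyclic type on {1,…,n}: each φ(s₂)_i is an (n−1)-cycle fixing i, and φ(s₂)_i ∘ φ(s₂)_j ∘ φ(s₂)_i⁻¹ = φ(s₂)_{φ(s₂)_i(j)} for all i, j. -/

import Mathlib

/-!
Call a permutation `g` equivariant for `φ` if `φ (g j) = g * φ j * g⁻¹` for all `j`; these form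
a subgroup, and the quandle identity says exactly that every `φ i` is equivariant. Each `φ i` has
`i` as its only fixed point, so `g` is equivariant as soon as conjugation by `g` maps the set
`{φ i}` into itself. This set is `{s₁} ∪ {s₁^m s₂ s₁^{-m}}`, visibly stable under conjugation by
`s₁`; since `s₁^{n-1} = s₂^{n-1} = 1`, condition (F2) says it is also `{s₂} ∪ {s₂^m s₁ s₂^{-m}}`,
which is stable under conjugation by `s₂`. Hence `s₁`, `s₂`, and with them every `φ i`, are
equivariant.
-/

open Equiv

section ConjOrbit

variable {G : Type*} [Group G]

def conjOrbit (g h : G) : Set G := Set.range fun m : ℕ => g ^ m * h * (g ^ m)⁻¹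

lemma conj_mem_insert_conjOrbit {g h x : G} (hx : x ∈ insert g (conjOrbit g h)) :
    g * x * g⁻¹ ∈ insert g (conjOrbit g h) := by
  rcases hx with rfl | ⟨m, rfl⟩
  · left; group
  · right; exact ⟨m + 1, by group⟩

lemma conjOrbit_eq_insert {g : G} (h : G) {k : ℕ} (hg : g ^ (k + 1) = 1) :
    conjOrbit g h = insert h {σ | ∃ m ∈ Finset.Icc 1 k, σ = g ^ m * h * (g ^ m)⁻¹} := by
  ext σ
  constructor
  · rintro ⟨m, rfl⟩
    dsimp only
    rw [pow_eq_pow_mod m hg]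
    by_cases hm : m % (k + 1) = 0
    · left; simp [hm]
    · right
      have := Nat.mod_lt m (show 0 < k + 1 by omega)
      exact ⟨m % (k + 1), Finset.mem_Icc.mpr ⟨by omega, by omega⟩, rfl⟩
  · rintro (rfl | ⟨m, -, rfl⟩)
    exacts [⟨0, by simp⟩, ⟨m, rfl⟩]

lemma insert_conjOrbit_comm {g h : G} {k : ℕ} (hg : g ^ (k + 1) = 1) (hh : h ^ (k + 1) = 1)
    (hgh : {σ | ∃ m ∈ Finset.Icc 1 k, σ = h ^ m * g * (h ^ m)⁻¹} =
      {σ | ∃ m ∈ Finset.Icc 1 k, σ = g ^ m * h * (g ^ m)⁻¹}) :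
    insert g (conjOrbit g h) = insert h (conjOrbit h g) := by
  rw [conjOrbit_eq_insert h hg, conjOrbit_eq_insert g hh, hgh, Set.insert_comm]

lemma Subgroup.insert_conjOrbit_subset {H : Subgroup G} {g h : G} (hg : g ∈ H) (hh : h ∈ H) :
    insert g (conjOrbit g h) ⊆ H := by
  rintro _ (rfl | ⟨m, rfl⟩)
  exacts [hg, H.mul_mem (H.mul_mem (H.pow_mem hg m) hh) (H.inv_mem (H.pow_mem hg m))]

end ConjOrbit

namespace Equiv.Perm

variable {α : Type*}

def conjEquivariant (φ : α → Perm α) : Subgroup (Perm α) where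
  carrier := {g | ∀ j, φ (g j) = g * φ j * g⁻¹}
  one_mem' _ := by simp
  mul_mem' {a b} ha hb j := by
    rw [Perm.mul_apply, ha, hb]
    group
  inv_mem' {a} ha j := by
    have h : φ j = a * φ (a⁻¹ j) * a⁻¹ := by simpa using ha (a⁻¹ j)
    rw [h]
    group

lemma IsCycle.pow_card_support [Fintype α] [DecidableEq α] {f : Perm α} (hf : f.IsCycle) :
    f ^ f.support.card = 1 :=
  hf.orderOf ▸ pow_orderOf_eq_one f

lemma eq_of_apply_eq_self_of_card_support [Fintype α] [DecidableEq α] {σ : Perm α}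
    (hσ : σ.support.card = Fintype.card α - 1) {x y : α} (hx : σ x = x) (hy : σ y = y) :
    x = y := by
  have hcard : σ.supportᶜ.card ≤ 1 := by
    rw [Finset.card_compl, hσ]
    omega
  exact Finset.card_le_one.mp hcard x (by simpa using hx) y (by simpa using hy)

-- `g * φ j * g⁻¹` fixes `g j`, and `φ k` fixes nothing but `k`.
lemma mem_conjEquivariant_of_conj_mem_range [Fintype α] [DecidableEq α] {φ : α → Perm α}
    (hfix : ∀ j, φ j j = j) (hcard : ∀ j, (φ j).support.card = Fintype.card α - 1) {g : Perm α}
    (hg : ∀ σ ∈ Set.range φ, g * σ * g⁻¹ ∈ Set.range φ) : g ∈ conjEquivariant φ := by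
  intro j
  obtain ⟨k, hk⟩ := hg (φ j) ⟨j, rfl⟩
  have hgj : (g * φ j * g⁻¹) (g j) = g j := by simp [hfix]
  rw [← hk] at hgj ⊢
  rw [eq_of_apply_eq_self_of_card_support (hcard k) hgj (hfix k)]

lemma conj_eq_apply_of_range_eq [Fintype α] [DecidableEq α] {φ : α → Perm α}
    (hfix : ∀ j, φ j j = j) (hcard : ∀ j, (φ j).support.card = Fintype.card α - 1)
    {g h : Perm α} (hg : Set.range φ = insert g (conjOrbit g h))
    (hh : Set.range φ = insert h (conjOrbit h g)) (i j : α) :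
    φ i * φ j * (φ i)⁻¹ = φ (φ i j) := by
  have hg' : g ∈ conjEquivariant φ :=
    mem_conjEquivariant_of_conj_mem_range hfix hcard (hg ▸ fun _ => conj_mem_insert_conjOrbit)
  have hh' : h ∈ conjEquivariant φ :=
    mem_conjEquivariant_of_conj_mem_range hfix hcard (hh ▸ fun _ => conj_mem_insert_conjOrbit)
  exact (Subgroup.insert_conjOrbit_subset hg' hh' (hg ▸ Set.mem_range_self i) j).symm

end Equiv.Perm

lemma Fin.val_one_of_two_le {n : ℕ} [NeZero n] (hn : 2 ≤ n) : ((1 : Fin n) : ℕ) = 1 :=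
  (Fin.val_one' n).trans (Nat.mod_eq_of_lt hn)

-- The paper's `s₁ = (2 3 ⋯ n)`, on the points `0, …, n - 1`.
def IsRotationFixingZero {n : ℕ} [NeZero n] (s : Perm (Fin n)) : Prop :=
  ∀ i : Fin n, s i = if i = 0 then 0 else if (i : ℕ) = n - 1 then 1 else i + 1

namespace IsRotationFixingZero

variable {n : ℕ} [NeZero n] {s : Perm (Fin n)}

lemma apply_zero (hs : IsRotationFixingZero s) : s 0 = 0 := by
  simp [hs 0]

lemma apply_ne_self (hs : IsRotationFixingZero s) (hn : 3 ≤ n) {x : Fin n} (hx : x ≠ 0) :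
    s x ≠ x := by
  have hx0 : (x : ℕ) ≠ 0 := Fin.val_ne_iff.mpr hx
  rw [hs x, if_neg hx]
  split_ifs with htop
  · rw [ne_eq, Fin.ext_iff, Fin.val_one_of_two_le (by omega)]
    omega
  · rw [ne_eq, Fin.ext_iff, Fin.val_add_one_of_lt' (by omega)]
    omega

lemma pow_apply_one_val (hs : IsRotationFixingZero s) (hn : 2 ≤ n) {m : ℕ} (hm : m ≤ n - 2) :
    ((s ^ m) 1 : ℕ) = m + 1 := by
  induction m with
  | zero => rw [pow_zero, Perm.one_apply, Fin.val_one_of_two_le hn]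
  | succ m ih =>
    have hval := ih (by omega)
    have hne : (s ^ m) 1 ≠ 0 := Fin.val_ne_iff.mp (by simp [hval])
    rw [pow_succ', Perm.mul_apply, hs, if_neg hne, if_neg (by omega),
      Fin.val_add_one_of_lt' (by omega), hval]

lemma pow_pred_apply_one (hs : IsRotationFixingZero s) (hn : 2 ≤ n) {k : Fin n} (hk : k ≠ 0) :
    (s ^ ((k : ℕ) - 1)) 1 = k := by
  have hk0 : (k : ℕ) ≠ 0 := Fin.val_ne_iff.mpr hk
  exact Fin.ext (by rw [hs.pow_apply_one_val hn (by omega)]; omega)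

lemma support_eq (hs : IsRotationFixingZero s) (hn : 3 ≤ n) : s.support = {0}ᶜ := by
  ext x
  rw [Perm.mem_support, Finset.mem_compl, Finset.mem_singleton]
  exact ⟨fun hsx hx => hsx (hx ▸ hs.apply_zero), hs.apply_ne_self hn⟩

lemma card_support (hs : IsRotationFixingZero s) (hn : 3 ≤ n) : s.support.card = n - 1 := by
  rw [hs.support_eq hn, Finset.card_compl, Finset.card_singleton, Fintype.card_fin]

lemma isCycle (hs : IsRotationFixingZero s) (hn : 3 ≤ n) : s.IsCycle := by
  have h10 : (1 : Fin n) ≠ 0 := Fin.ne_of_val_ne (by rw [Fin.val_one_of_two_le (by omega)]; simp)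
  refine ⟨1, hs.apply_ne_self hn h10, fun y hy => ⟨((y : ℕ) - 1 : ℕ), ?_⟩⟩
  have hy0 : y ≠ 0 := fun h => hy (h ▸ hs.apply_zero)
  rw [zpow_natCast, hs.pow_pred_apply_one (by omega) hy0]

end IsRotationFixingZero

section ConjFamily

variable {n : ℕ} [NeZero n] {s t : Perm (Fin n)} {φ : Fin n → Perm (Fin n)}

lemma apply_eq_pow_conj_of_ne_zero (hn : 2 ≤ n) (hφ1 : φ 1 = t)
    (hφ : ∀ k : Fin n, 2 ≤ (k : ℕ) → φ k = s ^ ((k : ℕ) - 1) * t * (s ^ ((k : ℕ) - 1))⁻¹)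
    {k : Fin n} (hk : k ≠ 0) : φ k = s ^ ((k : ℕ) - 1) * t * (s ^ ((k : ℕ) - 1))⁻¹ := by
  have hk0 : (k : ℕ) ≠ 0 := Fin.val_ne_iff.mpr hk
  by_cases hk1 : (k : ℕ) = 1
  · rw [hk1, Nat.sub_self, pow_zero, one_mul, inv_one, mul_one,
      show k = 1 from Fin.ext (by rw [hk1, Fin.val_one_of_two_le hn]), hφ1]
  · exact hφ k (by omega)

lemma isCycle_and_apply_self (hs : IsRotationFixingZero s) (hn : 3 ≤ n) (ht : t.IsCycle)
    (htcard : t.support.card = n - 1) (ht1 : t 1 = 1) (hφ0 : φ 0 = s)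
    (hφ : ∀ k : Fin n, k ≠ 0 → φ k = s ^ ((k : ℕ) - 1) * t * (s ^ ((k : ℕ) - 1))⁻¹) (i : Fin n) :
    (φ i).IsCycle ∧ (φ i).support.card = n - 1 ∧ φ i i = i := by
  by_cases hi : i = 0
  · rw [hi, hφ0]
    exact ⟨hs.isCycle hn, hs.card_support hn, hs.apply_zero⟩
  · have hi1 := hs.pow_pred_apply_one (by omega) hi
    rw [hφ i hi]
    refine ⟨ht.conj, by rw [Perm.card_support_conj, htcard], ?_⟩
    rw [Perm.mul_apply, Perm.mul_apply, Perm.inv_eq_iff_eq.mpr hi1.symm, ht1, hi1]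

lemma range_eq_insert_conjOrbit (hs : s ^ (n - 2 + 1) = 1) (hφ0 : φ 0 = s) (hφ1 : φ 1 = t)
    (hφ : ∀ k : Fin n, k ≠ 0 → φ k = s ^ ((k : ℕ) - 1) * t * (s ^ ((k : ℕ) - 1))⁻¹) :
    Set.range φ = insert s (conjOrbit s t) := by
  apply subset_antisymm
  · rintro _ ⟨k, rfl⟩
    by_cases hk : k = 0
    · exact .inl (by rw [hk, hφ0])
    · exact .inr ⟨_, (hφ k hk).symm⟩
  · rw [conjOrbit_eq_insert t hs]
    rintro _ (rfl | rfl | ⟨m, hm, rfl⟩)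
    · exact ⟨0, hφ0⟩
    · exact ⟨1, hφ1⟩
    · rw [Finset.mem_Icc] at hm
      exact ⟨⟨m + 1, by omega⟩, by rw [hφ _ (Fin.ne_of_val_ne (by simp))]; simp⟩

end ConjFamily

/-- Theorem 4.4: points `1,…,n` of the paper are labelled
`0,…,n−1 : Fin n`. Let `s₁ = (2 3 ⋯ n)` (fixing `0`, sending `i ↦ i+1` for
`1 ≤ i ≤ n−2` and `n−1 ↦ 1`) and let `s₂ ∈ F_n`, i.e. `s₂` is an (n−1)-cycle
with (F1) `s₂ 1 = 1` and (F2). Define `φ 0 = s₁`, `φ 1 = s₂`, and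
`φ k = s₁^{k−1} s₂ s₁^{−(k−1)}` for `k ≥ 2` (paper: `φ_i = s₁^{i−2} s₂ s₁^{−(i−2)}`
for `3 ≤ i ≤ n`). Then `φ` is a quandle structure of cyclic type: each `φ i` is
an (n−1)-cycle fixing `i`, and `φ i ∘ φ j ∘ (φ i)⁻¹ = φ (φ i j)`. -/
theorem stmt_19 (n : ℕ) [NeZero n] (hn : 3 ≤ n)
    (s₁ s₂ : Equiv.Perm (Fin n))
    (hs₁ : ∀ i : Fin n, s₁ i = if i = 0 then 0 else if (i : ℕ) = n - 1 then 1 else i + 1)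
    (h2c : s₂.IsCycle) (h2card : s₂.support.card = n - 1)
    (hF1 : s₂ 1 = 1)
    (hF2 : {σ : Equiv.Perm (Fin n) | ∃ m ∈ Finset.Icc 1 (n - 2), σ = s₂ ^ m * s₁ * (s₂ ^ m)⁻¹}
         = {σ : Equiv.Perm (Fin n) | ∃ m ∈ Finset.Icc 1 (n - 2), σ = s₁ ^ m * s₂ * (s₁ ^ m)⁻¹})
    (φ : Fin n → Equiv.Perm (Fin n))
    (hφ0 : φ 0 = s₁) (hφ1 : φ 1 = s₂)
    (hφ : ∀ k : Fin n, 2 ≤ (k : ℕ) →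
      φ k = s₁ ^ ((k : ℕ) - 1) * s₂ * (s₁ ^ ((k : ℕ) - 1))⁻¹) :
    (∀ i : Fin n, (φ i).IsCycle ∧ (φ i).support.card = n - 1 ∧ φ i i = i) ∧
    (∀ i j : Fin n, φ i * φ j * (φ i)⁻¹ = φ (φ i j)) := by
  have hs : IsRotationFixingZero s₁ := hs₁
  have hφne := fun k : Fin n => apply_eq_pow_conj_of_ne_zero (k := k) (by omega) hφ1 hφ
  have hcyc := isCycle_and_apply_self hs hn h2c h2card hF1 hφ0 hφne
  have hpow : ∀ s : Perm (Fin n), s.IsCycle → s.support.card = n - 1 → s ^ (n - 2 + 1) = 1 :=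
    fun s hc hcard => by rw [show n - 2 + 1 = s.support.card by omega, hc.pow_card_support]
  have hpow₁ := hpow s₁ (hs.isCycle hn) (hs.card_support hn)
  have hrange := range_eq_insert_conjOrbit hpow₁ hφ0 hφ1 hφne
  refine ⟨hcyc, Perm.conj_eq_apply_of_range_eq (fun i => (hcyc i).2.2)
    (fun i => by rw [(hcyc i).2.1, Fintype.card_fin]) hrange ?_⟩
  exact hrange.trans (insert_conjOrbit_comm hpow₁ (hpow s₂ h2c h2card) hF2)
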